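/- arXiv:2404.00446 — 2 statements merged into one kernel-verified Lean document; each statement's English description precedes it below -/
import Mathlib

section
/- The causality relation ≤ on g-events, defined by [σ] ≤ [σ·σ'] (whenever both are g-events), is a partial order: it is reflexive, transitive, and antisymmetric. -/
structure Comm (P L : Type) where
  sender : P
  receiver : P
  label : L

def play {P L : Type} (α : Comm P L) : Set P := {α.sender, α.receiver}

abbrev Trace (P L : Type) := List (Comm P L)

def playT {P L : Type} : Trace P L → Set P
  | [] => ∅
  | α :: σ => play α ∪ playT σ

/-- Permutation equivalence: least equivalence relation swapping adjacent
communications with disjoint participant sets. -/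
inductive PermEq {P L : Type} : Trace P L → Trace P L → Prop
  | swap (σ σ' : Trace P L) (α α' : Comm P L) (h : play α ∩ play α' = ∅) :
      PermEq (σ ++ α :: α' :: σ') (σ ++ α' :: α :: σ')
  | refl (σ : Trace P L) : PermEq σ σ
  | symm {σ σ' : Trace P L} : PermEq σ σ' → PermEq σ' σ
  | trans {σ σ' σ'' : Trace P L} : PermEq σ σ' → PermEq σ' σ'' → PermEq σ σ''

/-- A non-empty trace is pointed if every communication except the last shares
a participant with some later communication in the trace. -/
def IsPointed {P L : Type} (σ : Trace P L) : Prop :=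
  σ ≠ [] ∧ ∀ i (hi : i + 1 < σ.length),
    ∃ j, i < j ∧ ∃ hj : j < σ.length,
      (play (σ.get ⟨i, by omega⟩) ∩ play (σ.get ⟨j, hj⟩)).Nonempty

instance permSetoid (P L : Type) : Setoid (Trace P L) :=
  ⟨PermEq, ⟨PermEq.refl, PermEq.symm, PermEq.trans⟩⟩

/-- G-events live in the quotient of traces by permutation equivalence. -/
abbrev GEvent (P L : Type) := Quotient (permSetoid P L)

/-- A g-event proper is the class of a pointed trace. -/
def IsGEvent {P L : Type} (γ : GEvent P L) : Prop :=
  ∃ σ : Trace P L, IsPointed σ ∧ γ = ⟦σ⟧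

open Classical in
/-- Causal prefixing on traces: prepend `α` iff its participants meet those of `σ`. -/
noncomputable def cpre {P L : Type} (α : Comm P L) (σ : Trace P L) : Trace P L :=
  if (play α ∩ playT σ).Nonempty then α :: σ else σ

/-- `evFull σ` is (a canonical representative of) the g-event generated by `σ`. -/
noncomputable def evFull {P L : Type} : Trace P L → Trace P L
  | [] => []
  | [α] => [α]
  | α :: β :: σ => cpre α (evFull (β :: σ))

lemma playT_append {P L : Type} (σ τ : Trace P L) :
    playT (σ ++ τ) = playT σ ∪ playT τ := by
  induction σ with
  | nil => simp [playT]
  | cons α σ ih => simp [playT, ih, Set.union_assoc]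

lemma PermEq.playT_eq {P L : Type} {σ σ' : Trace P L} (h : PermEq σ σ') :
    playT σ = playT σ' := by
  induction h with
  | swap σ σ' α α' h =>
      simp [playT_append, playT, Set.union_left_comm, Set.union_comm, Set.union_assoc]
  | refl => rfl
  | symm _ ih => exact ih.symm
  | trans _ _ ih1 ih2 => exact ih1.trans ih2

lemma PermEq.cons {P L : Type} {σ σ' : Trace P L} (α : Comm P L) (h : PermEq σ σ') :
    PermEq (α :: σ) (α :: σ') := by
  induction h with
  | swap τ τ' β β' hd => exact PermEq.swap (α :: τ) τ' β β' hd
  | refl => exact PermEq.refl _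
  | symm _ ih => exact ih.symm
  | trans _ _ ih1 ih2 => exact ih1.trans ih2

/-- Causal prefixing of a g-event by a communication. -/
noncomputable def cprefix {P L : Type} (α : Comm P L) : GEvent P L → GEvent P L :=
  Quotient.map (cpre α) (by
    intro σ σ' h
    by_cases hc : (play α ∩ playT σ').Nonempty
    · simpa [cpre, h.playT_eq, hc] using (show α :: σ ≈ α :: σ' from PermEq.cons α h)
    · simpa [cpre, h.playT_eq, hc] using h)

/-- Causal prefixing of a g-event by a trace. -/
noncomputable def cprefixT {P L : Type} : Trace P L → GEvent P L → GEvent P L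
  | [], γ => γ
  | α :: σ, γ => cprefix α (cprefixT σ γ)

/-- Causality on g-events. -/
def GCause {P L : Type} (γ γ' : GEvent P L) : Prop :=
  ∃ σ σ' : Trace P L, γ = ⟦σ⟧ ∧ γ' = ⟦σ ++ σ'⟧

/-- Conflict on g-events. -/
def GConflict {P L : Type} (γ γ' : GEvent P L) : Prop :=
  ∃ (σ σ₁ σ₂ : Trace P L) (p q : P) (l₁ l₂ : L), l₁ ≠ l₂ ∧
    γ = ⟦σ ++ ⟨p, q, l₁⟩ :: σ₁⟧ ∧ γ' = ⟦σ ++ ⟨p, q, l₂⟩ :: σ₂⟧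

/-! Causality `[σ] ≤ [σ · σ']` is reflexive with `σ' = []` and transitive because
equivalent traces stay equivalent after appending a common suffix. Equivalent traces
are permutations of each other and so have the same length; hence if
`[σ] ≤ [σ · σ'] ≤ [σ]`, then `σ'` is empty. -/

namespace PermEq

variable {P L : Type}

theorem perm {σ σ' : Trace P L} (h : PermEq σ σ') : σ.Perm σ' := by
  induction h with
  | swap τ τ' β β' _ => exact (List.Perm.swap β β' τ').symm.append_left τ
  | refl => exact List.Perm.refl _
  | symm _ ih => exact ih.symm
  | trans _ _ ih₁ ih₂ => exact ih₁.trans ih₂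

theorem append_right {σ σ' : Trace P L} (h : PermEq σ σ') (τ : Trace P L) :
    PermEq (σ ++ τ) (σ' ++ τ) := by
  induction h with
  | swap ρ ρ' β β' hd => simpa using PermEq.swap ρ (ρ' ++ τ) β β' hd
  | refl => exact PermEq.refl _
  | symm _ ih => exact ih.symm
  | trans _ _ ih₁ ih₂ => exact ih₁.trans ih₂

end PermEq

namespace GEvent

variable {P L : Type}

theorem mk_append_eq_mk_append {σ τ : Trace P L} (h : (⟦σ⟧ : GEvent P L) = ⟦τ⟧)
    (ρ : Trace P L) :
    (⟦σ ++ ρ⟧ : GEvent P L) = ⟦τ ++ ρ⟧ :=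
  Quotient.sound ((Quotient.exact h : PermEq σ τ).append_right ρ)

theorem length_add_length_eq_of_mk_eq {σ σ' τ : Trace P L}
    (h : (⟦σ ++ σ'⟧ : GEvent P L) = ⟦τ⟧) : σ.length + σ'.length = τ.length := by
  rw [← List.length_append]
  exact (Quotient.exact h : PermEq _ _).perm.length_eq

end GEvent

namespace GCause

variable {P L : Type}

protected theorem refl (γ : GEvent P L) : GCause γ γ := by
  obtain ⟨σ, rfl⟩ := Quotient.exists_rep γ
  exact ⟨σ, [], rfl, by rw [List.append_nil]⟩

protected theorem trans {γ γ' γ'' : GEvent P L} :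
    GCause γ γ' → GCause γ' γ'' → GCause γ γ'' := by
  rintro ⟨σ, σ', rfl, hσ'⟩ ⟨τ, τ', hτ, rfl⟩
  refine ⟨σ, σ' ++ τ', rfl, ?_⟩
  rw [← List.append_assoc]
  exact (GEvent.mk_append_eq_mk_append (hσ'.symm.trans hτ) τ').symm

protected theorem antisymm {γ γ' : GEvent P L} :
    GCause γ γ' → GCause γ' γ → γ = γ' := by
  rintro ⟨σ, σ', rfl, hσ'⟩ ⟨τ, τ', hτ, hτ'⟩
  have hlen₁ := GEvent.length_add_length_eq_of_mk_eq (hσ'.symm.trans hτ)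
  have hlen₂ := GEvent.length_add_length_eq_of_mk_eq hτ'.symm
  obtain rfl : σ' = [] := List.eq_nil_of_length_eq_zero (by omega)
  rw [hσ', List.append_nil]

end GCause

/-- the causality relation on g-events is a partial order:
reflexive, transitive and antisymmetric. -/
theorem gcause_partialOrder (P L : Type) :
    (∀ γ : GEvent P L, IsGEvent γ → GCause γ γ) ∧
    (∀ γ γ' γ'' : GEvent P L, IsGEvent γ → IsGEvent γ' → IsGEvent γ'' →
      GCause γ γ' → GCause γ' γ'' → GCause γ γ'') ∧
    (∀ γ γ' : GEvent P L, IsGEvent γ → IsGEvent γ' →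
      GCause γ γ' → GCause γ' γ → γ = γ') :=
  ⟨fun γ _ => GCause.refl γ,
   fun _ _ _ _ _ _ => GCause.trans,
   fun _ _ _ _ => GCause.antisymm⟩
end

section
/- Causality and conflict on g-events are mutually exclusive: if γ ≤ γ' then ¬(γ # γ'). -/
/-!
Project a trace onto the communications in which a fixed participant `p` takes part. A swap
exchanges two communications with disjoint participants, at most one of which involves `p`,
so the projection is an invariant of g-events. Causality makes every projection of `γ` a
prefix of the corresponding projection of `γ'`, whereas a conflict at `p → q` makes the
projections onto `p` agree up to a position where their labels differ.
-/

namespace Trace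

variable {P L : Type}

open Classical in
noncomputable def proj (p : P) (σ : Trace P L) : Trace P L :=
  σ.filter (fun α => decide (p ∈ play α))

lemma proj_append (p : P) (σ τ : Trace P L) : proj p (σ ++ τ) = proj p σ ++ proj p τ :=
  List.filter_append σ τ

lemma proj_cons_of_mem {p : P} {α : Comm P L} (hp : p ∈ play α) (σ : Trace P L) :
    proj p (α :: σ) = α :: proj p σ := by
  simp [proj, hp]

lemma proj_swap_of_disjoint (p : P) {α α' : Comm P L} (h : play α ∩ play α' = ∅) :
    proj p [α, α'] = proj p [α', α] := by
  have hp : ¬ (p ∈ play α ∧ p ∈ play α') := fun hp => Set.eq_empty_iff_forall_notMem.mp h p hp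
  by_cases h₁ : p ∈ play α <;> by_cases h₂ : p ∈ play α' <;> simp_all [proj]

end Trace

lemma PermEq.proj_eq {P L : Type} (p : P) {σ σ' : Trace P L} (h : PermEq σ σ') :
    Trace.proj p σ = Trace.proj p σ' := by
  induction h with
  | swap σ σ' α α' hd =>
      change Trace.proj p (σ ++ ([α, α'] ++ σ')) = Trace.proj p (σ ++ ([α', α] ++ σ'))
      simp only [Trace.proj_append, Trace.proj_swap_of_disjoint p hd]
  | refl => rfl
  | symm _ ih => exact ih.symm
  | trans _ _ ih₁ ih₂ => exact ih₁.trans ih₂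

noncomputable def GEvent.proj {P L : Type} (p : P) : GEvent P L → Trace P L :=
  Quotient.lift (Trace.proj p) fun _ _ => PermEq.proj_eq p

lemma GCause.proj_prefix {P L : Type} {γ γ' : GEvent P L} (h : GCause γ γ') (p : P) :
    GEvent.proj p γ <+: GEvent.proj p γ' := by
  obtain ⟨σ, σ', rfl, rfl⟩ := h
  simpa only [GEvent.proj, Quotient.lift_mk, Trace.proj_append] using List.prefix_append _ _

lemma GConflict.exists_not_proj_prefix {P L : Type} {γ γ' : GEvent P L} (h : GConflict γ γ') :
    ∃ p : P, ¬ GEvent.proj p γ <+: GEvent.proj p γ' := by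
  obtain ⟨σ, σ₁, σ₂, p, q, l₁, l₂, hne, rfl, rfl⟩ := h
  have hp (l : L) : p ∈ play (⟨p, q, l⟩ : Comm P L) := Or.inl rfl
  refine ⟨p, ?_⟩
  simp only [GEvent.proj, Quotient.lift_mk, Trace.proj_append, Trace.proj_cons_of_mem (hp _),
    List.prefix_append_right_inj, List.cons_prefix_cons, Comm.mk.injEq]
  exact fun h => hne h.1.2.2

theorem gcause_not_gconflict_general {P L : Type} (γ γ' : GEvent P L)
    (hle : GCause γ γ') : ¬ GConflict γ γ' := fun hc =>
  let ⟨p, hp⟩ := hc.exists_not_proj_prefix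
  hp (hle.proj_prefix p)

/-- causality and conflict on g-events are mutually exclusive. -/
theorem gcause_not_gconflict {P L : Type} (γ γ' : GEvent P L)
    (h1 : IsGEvent γ) (h2 : IsGEvent γ')
    (hle : GCause γ γ') : ¬ GConflict γ γ' :=
  gcause_not_gconflict_general γ γ' hle
end
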